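/- arXiv:2106.03442 — 7 statements merged into one kernel-verified Lean document; each statement's English description precedes it below -/
import Mathlib

section
/- For a finite ergodic Markov chain with transition matrix $P_\pi$, stationary distribution row vector $d_\pi$, and discount factor $\gamma \in (0,1]$, the matrix $I - \gamma P_\pi + \gamma e d_\pi$ is invertible, where $e$ is the all-ones column vector. -/
open Matrix

/-- For a finite ergodic (primitive) Markov chain with transition matrix `P`,
stationary distribution row vector `d`, and discount factor `γ ∈ (0,1]`,
the matrix `I - γP + γ e d` is invertible, where `e` is the all-ones vector. -/
theorem stmt0 {n : ℕ} (P : Matrix (Fin n) (Fin n) ℝ) (d : Fin n → ℝ)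
    (hP_nonneg : ∀ i j, 0 ≤ P i j)
    (hP_row : ∀ i, ∑ j, P i j = 1)
    (hd_nonneg : ∀ i, 0 ≤ d i)
    (hd_sum : ∑ i, d i = 1)
    (hd_stat : Matrix.vecMul d P = d)
    (hErg : ∃ k : ℕ, ∀ i j, 0 < (P ^ k) i j)
    (γ : ℝ) (hγ0 : 0 < γ) (hγ1 : γ ≤ 1) :
    IsUnit (1 - γ • P + γ • Matrix.vecMulVec (fun _ => (1 : ℝ)) d) := by
  set M : Matrix (Fin n) (Fin n) ℝ :=
    1 - γ • P + γ • Matrix.vecMulVec (fun _ => (1 : ℝ)) d with hM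
  rw [Matrix.isUnit_iff_isUnit_det, isUnit_iff_ne_zero]
  intro hdet
  obtain ⟨x, hx0, hx⟩ := (Matrix.exists_mulVec_eq_zero_iff).2 hdet
  -- formula for M.mulVec
  have haux : (Matrix.vecMulVec (fun _ : Fin n => (1 : ℝ)) d).mulVec x = fun _ : Fin n => d ⬝ᵥ x := by
    funext i
    simp [Matrix.mulVec, Matrix.vecMulVec_apply, dotProduct]
  have hmv : M.mulVec x = x - γ • P.mulVec x + (γ * (d ⬝ᵥ x)) • (fun _ : Fin n => (1 : ℝ)) := by
    rw [hM, Matrix.add_mulVec, Matrix.sub_mulVec, Matrix.one_mulVec,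
      Matrix.smul_mulVec, Matrix.smul_mulVec, haux]
    funext i
    simp [mul_comm]
  -- d ⬝ᵥ x = 0
  have hdx : d ⬝ᵥ x = 0 := by
    have h1 : d ⬝ᵥ (M.mulVec x) = d ⬝ᵥ x := by
      rw [hmv]
      have h2 : d ⬝ᵥ (γ • P.mulVec x) = γ * (d ⬝ᵥ x) := by
        rw [dotProduct_smul, Matrix.dotProduct_mulVec, hd_stat]
        simp
      have h3 : d ⬝ᵥ ((γ * (d ⬝ᵥ x)) • (fun _ : Fin n => (1 : ℝ))) = γ * (d ⬝ᵥ x) := by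
        rw [dotProduct_smul]
        simp [dotProduct, hd_sum]
      rw [dotProduct_add, dotProduct_sub, h2, h3]
      ring
    rw [hx] at h1
    simpa using h1.symm
  -- hence x = γ • P.mulVec x
  have hfix : x = γ • P.mulVec x := by
    have := hx
    rw [hmv, hdx] at this
    simpa [sub_eq_zero] using this
  -- n is nonempty
  obtain ⟨j0, hj0⟩ : ∃ j, x j ≠ 0 := by
    by_contra h
    push_neg at h
    exact hx0 (funext h)
  have hne : (Finset.univ : Finset (Fin n)).Nonempty := ⟨j0, Finset.mem_univ _⟩
  rcases lt_or_eq_of_le hγ1 with hlt | heq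
  · -- γ < 1 : sup-norm contraction
    obtain ⟨i, -, hi⟩ := Finset.exists_max_image Finset.univ (fun j => |x j|) hne
    have hipos : 0 < |x i| := lt_of_lt_of_le (abs_pos.2 hj0) (hi j0 (Finset.mem_univ _))
    have hxi : |x i| ≤ γ * |x i| := by
      have hfi : x i = γ * (P.mulVec x) i := by
        have := congrFun hfix i
        simpa using this
      calc |x i| = γ * |P.mulVec x i| := by
            rw [hfi, abs_mul, abs_of_pos hγ0]
        _ ≤ γ * |x i| := by
            apply mul_le_mul_of_nonneg_left _ hγ0.le
            calc |P.mulVec x i| = |∑ j, P i j * x j| := by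
                  simp [Matrix.mulVec, dotProduct]
              _ ≤ ∑ j, P i j * |x j| := by
                  refine (Finset.abs_sum_le_sum_abs _ _).trans ?_
                  refine Finset.sum_le_sum fun j _ => ?_
                  rw [abs_mul, abs_of_nonneg (hP_nonneg i j)]
              _ ≤ ∑ j, P i j * |x i| :=
                  Finset.sum_le_sum fun j _ =>
                    mul_le_mul_of_nonneg_left (hi j (Finset.mem_univ _)) (hP_nonneg i j)
              _ = |x i| := by rw [← Finset.sum_mul, hP_row, one_mul]
    nlinarith
  · -- γ = 1 : ergodicity forces x constant, then d ⬝ᵥ x = 0 forces x = 0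
    subst heq
    have hfix1 : P.mulVec x = x := by simpa using hfix.symm
    have hpow : ∀ m : ℕ, (P ^ m).mulVec x = x := by
      intro m
      induction m with
      | zero => simp
      | succ m ih =>
        rw [pow_succ, ← Matrix.mulVec_mulVec, hfix1, ih]
    have hrow : ∀ m : ℕ, ∀ i, ∑ j, (P ^ m) i j = 1 := by
      intro m
      induction m with
      | zero => intro i; simp [Matrix.one_apply, Finset.sum_ite_eq]
      | succ m ih =>
        intro i
        rw [pow_succ]
        calc ∑ j, (P ^ m * P) i j = ∑ j, ∑ l, (P ^ m) i l * P l j := by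
              simp [Matrix.mul_apply]
          _ = ∑ l, (P ^ m) i l * ∑ j, P l j := by
              rw [Finset.sum_comm]; simp [Finset.mul_sum]
          _ = 1 := by simp [hP_row, ih]
    obtain ⟨k, hk⟩ := hErg
    obtain ⟨i, -, hi⟩ := Finset.exists_max_image Finset.univ x hne
    have hconst : ∀ j, x j = x i := by
      have hzero : ∑ j, (P ^ k) i j * (x i - x j) = 0 := by
        have h1 : ∑ j, (P ^ k) i j * x i = x i := by
          rw [← Finset.sum_mul, hrow, one_mul]
        have h2 : ∑ j, (P ^ k) i j * x j = x i := by
          have := congrFun (hpow k) i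
          simpa [Matrix.mulVec, dotProduct] using this
        simp only [mul_sub, Finset.sum_sub_distrib, h1, h2, sub_self]
      intro j
      have hterm : ∀ l ∈ Finset.univ, 0 ≤ (P ^ k) i l * (x i - x l) := fun l _ =>
        mul_nonneg (hk i l).le (sub_nonneg.2 (hi l (Finset.mem_univ _)))
      have := (Finset.sum_eq_zero_iff_of_nonneg hterm).1 hzero j (Finset.mem_univ _)
      rcases mul_eq_zero.1 this with h | h
      · exact absurd h (hk i j).ne'
      · linarith [sub_eq_zero.1 h]
    have hxi0 : x i = 0 := by
      have : d ⬝ᵥ x = x i := by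
        simp only [dotProduct]
        calc ∑ l, d l * x l = ∑ l, d l * x i := by
              exact Finset.sum_congr rfl fun l _ => by rw [hconst l]
          _ = x i := by rw [← Finset.sum_mul, hd_sum, one_mul]
      rw [hdx] at this; exact this.symm
    exact hj0 (by rw [hconst j0, hxi0])
end

section
/- The discounted fundamental matrix satisfies $Z_{\pi,\gamma}(I - \gamma P_\pi) = I - \gamma e d_\pi$. -/
open Matrix

/-- The discounted fundamental matrix satisfies `Z (I - γP) = I - γ e d`. -/
theorem stmt3 {n : ℕ} (P : Matrix (Fin n) (Fin n) ℝ) (d : Fin n → ℝ)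
    (hP_nonneg : ∀ i j, 0 ≤ P i j)
    (hP_row : ∀ i, ∑ j, P i j = 1)
    (hd_nonneg : ∀ i, 0 ≤ d i)
    (hd_sum : ∑ i, d i = 1)
    (hd_stat : Matrix.vecMul d P = d)
    (γ : ℝ) (hγ0 : 0 < γ) (hγ1 : γ ≤ 1)
    (hInv : IsUnit (1 - γ • P + γ • Matrix.vecMulVec (fun _ => (1 : ℝ)) d)) :
    (1 - γ • P + γ • Matrix.vecMulVec (fun _ => (1 : ℝ)) d)⁻¹ * (1 - γ • P)
      = 1 - γ • Matrix.vecMulVec (fun _ => (1 : ℝ)) d := by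
  set E : Matrix (Fin n) (Fin n) ℝ := Matrix.vecMulVec (fun _ => (1 : ℝ)) d with hE
  clear_value E
  set M : Matrix (Fin n) (Fin n) ℝ := 1 - γ • P + γ • E with hM
  have hPE : P * E = E := by
    ext i j
    simp [hE, Matrix.mul_apply, Matrix.vecMulVec_apply, ← Finset.sum_mul, hP_row]
  have hEE : E * E = E := by
    ext i j
    simp [hE, Matrix.mul_apply, Matrix.vecMulVec_apply, ← Finset.sum_mul, hd_sum]
  have key : M * (1 - γ • E) = 1 - γ • P := by
    rw [hM]
    simp only [Matrix.mul_sub, Matrix.sub_mul, Matrix.add_mul, Matrix.mul_one,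
      Matrix.one_mul, Matrix.smul_mul, Matrix.mul_smul, hPE, hEE, smul_smul]
    module
  have hdet : IsUnit M.det := (Matrix.isUnit_iff_isUnit_det M).mp hInv
  calc M⁻¹ * (1 - γ • P) = M⁻¹ * (M * (1 - γ • E)) := by rw [key]
    _ = (M⁻¹ * M) * (1 - γ • E) := by rw [Matrix.mul_assoc]
    _ = 1 - γ • E := by rw [Matrix.nonsing_inv_mul M hdet, Matrix.one_mul]
end

section
/- With $Z_{\pi',\gamma} = (I - \gamma P_{\pi'} + \gamma e d_{\pi'})^{-1}$, the discounted state distribution difference satisfies $d_{\pi',\gamma} - d_{\pi,\gamma} = \gamma\, d_{\pi,\gamma}(P_{\pi'} - P_\pi) Z_{\pi',\gamma}$. -/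
open Matrix

lemma vecMul_matsmul {n : ℕ} (w : Fin n → ℝ) (c : ℝ) (B : Matrix (Fin n) (Fin n) ℝ) :
    Matrix.vecMul w (c • B) = c • Matrix.vecMul w B := by
  funext j
  simp [Matrix.vecMul, dotProduct, Finset.mul_sum, mul_left_comm]

lemma stoch_det_unit {n : ℕ} (P : Matrix (Fin n) (Fin n) ℝ)
    (hP_nonneg : ∀ i j, 0 ≤ P i j) (hP_row : ∀ i, ∑ j, P i j = 1)
    {γ : ℝ} (hγ0 : 0 < γ) (hγ1 : γ < 1) : IsUnit (1 - γ • P).det := by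
  rw [isUnit_iff_ne_zero]
  apply det_ne_zero_of_sum_row_lt_diag
  intro k
  have hPkk : P k k ≤ 1 := by
    rw [← hP_row k]
    exact Finset.single_le_sum (fun j _ => hP_nonneg k j) (Finset.mem_univ k)
  have h1 : ∑ j ∈ Finset.univ.erase k, ‖(1 - γ • P) k j‖ = γ * (1 - P k k) := by
    have h2 : ∀ j ∈ Finset.univ.erase k, ‖(1 - γ • P) k j‖ = γ * P k j := by
      intro j hj
      have hjk : j ≠ k := Finset.ne_of_mem_erase hj
      have he : (1 - γ • P) k j = -(γ * P k j) := by
        simp [Matrix.sub_apply, Matrix.one_apply_ne (Ne.symm hjk), Matrix.smul_apply,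
          smul_eq_mul]
      rw [he, Real.norm_eq_abs, abs_neg,
        abs_of_nonneg (mul_nonneg hγ0.le (hP_nonneg k j))]
    rw [Finset.sum_congr rfl h2, ← Finset.mul_sum,
      Finset.sum_erase_eq_sub (Finset.mem_univ k), hP_row k]
  rw [h1]
  have hdiag : ‖(1 - γ • P) k k‖ = 1 - γ * P k k := by
    have h3 : γ * P k k < 1 := by nlinarith [hP_nonneg k k]
    have he : (1 - γ • P) k k = 1 - γ * P k k := by
      simp [Matrix.sub_apply, Matrix.one_apply_eq, Matrix.smul_apply, smul_eq_mul]
    rw [he, Real.norm_eq_abs, abs_of_nonneg (by linarith)]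
  rw [hdiag]
  nlinarith [hP_nonneg k k]

/-- With `Z' = (I - γPπ' + γ e dπ')⁻¹`, the difference of discounted state distributions
satisfies `d_{π',γ} - d_{π,γ} = γ d_{π,γ} (Pπ' - Pπ) Z'`. -/
theorem stmt6 {n : ℕ} (P P' : Matrix (Fin n) (Fin n) ℝ) (d0 d' : Fin n → ℝ)
    (hP_nonneg : ∀ i j, 0 ≤ P i j) (hP_row : ∀ i, ∑ j, P i j = 1)
    (hP'_nonneg : ∀ i j, 0 ≤ P' i j) (hP'_row : ∀ i, ∑ j, P' i j = 1)
    (hd'_nonneg : ∀ i, 0 ≤ d' i) (hd'_sum : ∑ i, d' i = 1)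
    (hd'_stat : Matrix.vecMul d' P' = d')
    (hd0_nonneg : ∀ i, 0 ≤ d0 i) (hd0_sum : ∑ i, d0 i = 1)
    (γ : ℝ) (hγ0 : 0 < γ) (hγ1 : γ < 1)
    (hInv : IsUnit (1 - γ • P' + γ • Matrix.vecMulVec (fun _ => (1 : ℝ)) d'))
    (dγ dγ' : Fin n → ℝ)
    (hdγ : dγ = (1 - γ) • Matrix.vecMul d0 (1 - γ • P)⁻¹)
    (hdγ' : dγ' = (1 - γ) • Matrix.vecMul d0 (1 - γ • P')⁻¹) :
    dγ' - dγ = γ • Matrix.vecMul (Matrix.vecMul dγ (P' - P))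
      (1 - γ • P' + γ • Matrix.vecMulVec (fun _ => (1 : ℝ)) d')⁻¹ := by
  set A : Matrix (Fin n) (Fin n) ℝ := 1 - γ • P with hA
  set A' : Matrix (Fin n) (Fin n) ℝ := 1 - γ • P' with hA'
  set E : Matrix (Fin n) (Fin n) ℝ := Matrix.vecMulVec (fun _ => (1 : ℝ)) d' with hE
  set M : Matrix (Fin n) (Fin n) ℝ := A' + γ • E with hM
  have hAdet : IsUnit A.det := stoch_det_unit P hP_nonneg hP_row hγ0 hγ1
  have hA'det : IsUnit A'.det := stoch_det_unit P' hP'_nonneg hP'_row hγ0 hγ1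
  have hMdet : IsUnit M.det := (Matrix.isUnit_iff_isUnit_det M).mp hInv
  have hγne : (1 : ℝ) - γ ≠ 0 := by linarith
  -- dγ * A = (1-γ) • d0
  have hdγA : Matrix.vecMul dγ A = (1 - γ) • d0 := by
    rw [hdγ, Matrix.smul_vecMul, Matrix.vecMul_vecMul, Matrix.nonsing_inv_mul A hAdet,
      Matrix.vecMul_one]
  set v : Fin n → ℝ := Matrix.vecMul dγ (P' - P) with hv
  -- Step 1 : dγ' - dγ = γ • v * A'⁻¹
  have step1 : dγ' - dγ = γ • Matrix.vecMul v A'⁻¹ := by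
    have e2 : dγ = Matrix.vecMul (Matrix.vecMul dγ A') A'⁻¹ := by
      rw [Matrix.vecMul_vecMul, Matrix.mul_nonsing_inv A' hA'det, Matrix.vecMul_one]
    have e1 : dγ' = Matrix.vecMul (Matrix.vecMul dγ A) A'⁻¹ := by
      rw [hdγA, hdγ', Matrix.smul_vecMul]
    calc dγ' - dγ
        = Matrix.vecMul (Matrix.vecMul dγ A) A'⁻¹
          - Matrix.vecMul (Matrix.vecMul dγ A') A'⁻¹ := by rw [← e1, ← e2]
      _ = Matrix.vecMul (Matrix.vecMul dγ A - Matrix.vecMul dγ A') A'⁻¹ := by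
          rw [Matrix.sub_vecMul]
      _ = Matrix.vecMul (Matrix.vecMul dγ (A - A')) A'⁻¹ := by rw [← Matrix.vecMul_sub]
      _ = γ • Matrix.vecMul v A'⁻¹ := by
          rw [show A - A' = γ • (P' - P) by rw [hA, hA']; module, vecMul_matsmul,
            Matrix.smul_vecMul, hv]
  -- sum of v is zero
  have hvsum : ∑ j, v j = 0 := by
    simp only [hv, Matrix.vecMul, dotProduct, Matrix.sub_apply]
    rw [Finset.sum_comm]
    have : ∀ i, ∑ j, dγ i * (P' i j - P i j) = 0 := by
      intro i
      rw [← Finset.mul_sum, Finset.sum_sub_distrib, hP'_row, hP_row]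
      ring
    simp [this]
  -- A'⁻¹ *ᵥ 1 = (1-γ)⁻¹ • 1
  have hA'e : A' *ᵥ (fun _ => (1 : ℝ)) = (1 - γ) • (fun _ => (1 : ℝ)) := by
    funext i
    simp [Matrix.mulVec, dotProduct, hA', Matrix.sub_apply, Matrix.one_apply,
      Finset.sum_sub_distrib, ← Finset.mul_sum, hP'_row]
  have hA'inv_e : A'⁻¹ *ᵥ (fun _ => (1 : ℝ)) = (1 - γ)⁻¹ • (fun _ => (1 : ℝ)) := by
    have h := congrArg (fun w => A'⁻¹ *ᵥ w) hA'e
    simp only [Matrix.mulVec_smul] at h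
    rw [Matrix.mulVec_mulVec, Matrix.nonsing_inv_mul A' hA'det, Matrix.one_mulVec] at h
    have h2 := congrArg (fun w => (1 - γ)⁻¹ • w) h.symm
    simpa [smul_smul, inv_mul_cancel₀ hγne] using h2
  -- v * A'⁻¹ has zero sum
  have hwsum : Matrix.vecMul v A'⁻¹ ⬝ᵥ (fun _ => (1 : ℝ)) = 0 := by
    rw [← Matrix.dotProduct_mulVec, hA'inv_e, dotProduct_smul]
    have : v ⬝ᵥ (fun _ => (1 : ℝ)) = 0 := by
      simpa [dotProduct] using hvsum
    rw [this, smul_zero]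
  -- key : v * A'⁻¹ * E = 0
  have hkey : Matrix.vecMul (Matrix.vecMul v A'⁻¹) E = 0 := by
    funext j
    have hwsum' : ∑ x, ∑ k, v k * A'⁻¹ k x = 0 := by
      simpa [dotProduct, Matrix.vecMul] using hwsum
    simp only [hE, Matrix.vecMul, dotProduct, Matrix.vecMulVec_apply, one_mul,
      Pi.zero_apply]
    rw [← Finset.sum_mul, hwsum', zero_mul]
  -- Step 2 : v * A'⁻¹ = v * M⁻¹
  have step2 : Matrix.vecMul v A'⁻¹ = Matrix.vecMul v M⁻¹ := by
    have hdiff : A'⁻¹ - M⁻¹ = A'⁻¹ * (γ • E) * M⁻¹ := by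
      have h1 : M - A' = γ • E := by rw [hM]; module
      calc A'⁻¹ - M⁻¹
          = A'⁻¹ * (M * M⁻¹) - (A'⁻¹ * A') * M⁻¹ := by
            rw [Matrix.mul_nonsing_inv M hMdet, Matrix.nonsing_inv_mul A' hA'det,
              Matrix.mul_one, Matrix.one_mul]
        _ = A'⁻¹ * (M - A') * M⁻¹ := by noncomm_ring
        _ = A'⁻¹ * (γ • E) * M⁻¹ := by rw [h1]
    have : Matrix.vecMul v A'⁻¹ - Matrix.vecMul v M⁻¹ = 0 := by
      rw [← Matrix.vecMul_sub, hdiff, ← Matrix.vecMul_vecMul, ← Matrix.vecMul_vecMul,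
        vecMul_matsmul, Matrix.smul_vecMul, hkey, Matrix.zero_vecMul, smul_zero]
    exact sub_eq_zero.mp this
  rw [step1, step2]
end

section
/- If $(1-\gamma)\kappa_\pi < 1$, then the discounted fundamental matrix satisfies $Z_{\pi,\gamma} = [I - M_\pi D_\pi^{-1} + E(Z_{\pi,\gamma})_{\mathrm{dg}} - (1-\gamma) E (Z_{\pi,\gamma} M_\pi)_{\mathrm{dg}} D_\pi^{-1}] (I - (1-\gamma) M_\pi D_\pi^{-1})^{-1}$. -/
/-!
Write `N = M D⁻¹` and `W = e dᵀ`. Multiplied on the right by `D⁻¹`, the first-passage equation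
becomes `P N = N - W + P`. Multiplying it by `A = I - γ P + γ W` and then by `Z = A⁻¹` gives
`Z (I - (1 - γ) N) = I - N + γ W N`, where `W N = e vᵀ` has constant columns; since `N` has unit
diagonal, comparing diagonal entries expresses `γ v` through the diagonals of `Z` and `Z M`,
which is the bracket of the formula.

For the invertibility of `I - (1 - γ) N`, note `(I - P + W) (I - (1 - γ) N) = A (I - (1 - γ) W N)`
and `(W N)² = κ W N`, so the rank-one perturbation `I - (1 - γ) W N` is invertible as soon as
`(1 - γ) κ ≠ 1`.
-/

open Matrix

theorem isUnit_one_sub_smul_of_mul_self_eq_smul {K R : Type*} [Field K] [Ring R] [Algebra K R]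
    {X : R} {κ c : K} (hX : X * X = κ • X) (hc : 1 - c * κ ≠ 0) : IsUnit (1 - c • X) := by
  -- the inverse is the geometric series `1 + ∑ cᵏ⁺¹ κᵏ X = 1 + t X`
  obtain ⟨t, ht⟩ : ∃ t : K, t * (1 - c * κ) = c := ⟨_, div_mul_cancel₀ c hc⟩
  refine ⟨⟨1 - c • X, 1 + t • X, ?_, ?_⟩, rfl⟩ <;>
  · simp only [mul_add, add_mul, mul_sub, sub_mul, one_mul, mul_one, smul_mul_smul_comm, hX,
      smul_smul]
    linear_combination (norm := module) ht • X

section Discounted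

variable {K R : Type*} [CommRing K] [Ring R] [Algebra K R] {P W N Z : R} {γ : K}

theorem one_sub_smul_add_smul_mul_of_mul_eq (hPN : P * N = N - W + P) :
    (1 - γ • P + γ • W) * N = (1 - γ) • N + (γ • W - γ • P) + γ • (W * N) := by
  simp only [add_mul, sub_mul, one_mul, smul_mul_assoc, hPN]
  module

theorem mul_one_sub_smul_eq_of_mul_eq_one (hPN : P * N = N - W + P)
    (hZ : Z * (1 - γ • P + γ • W) = 1) (hZWN : Z * (W * N) = W * N) :
    Z * (1 - (1 - γ) • N) = 1 - N + γ • (W * N) := by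
  have hN : N = (1 - γ) • (Z * N) + 1 - Z + γ • (W * N) := by
    calc N = Z * ((1 - γ • P + γ • W) * N) := by rw [← mul_assoc, hZ, one_mul]
      _ = (1 - γ) • (Z * N) + Z * (1 - γ • P + γ • W) - Z + γ • (Z * (W * N)) := by
        rw [one_sub_smul_add_smul_mul_of_mul_eq hPN]
        simp only [mul_add, mul_sub, mul_one, mul_smul_comm]
        module
      _ = _ := by rw [hZ, hZWN]
  rw [mul_sub, mul_one, mul_smul_comm]
  nth_rewrite 2 [hN]
  abel

theorem one_sub_add_mul_one_sub_smul (hPN : P * N = N - W + P)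
    (hWN : (1 - γ • P + γ • W) * (W * N) = W * N) :
    (1 - P + W) * (1 - (1 - γ) • N) = (1 - γ • P + γ • W) * (1 - (1 - γ) • (W * N)) := by
  simp only [mul_sub, mul_one, mul_smul_comm, hWN, sub_mul, add_mul, one_mul, hPN]
  module

end Discounted

namespace Matrix

variable {m ι K : Type*} [Fintype ι]

section CommRing

variable [CommRing K]

theorem mul_vecMulVec_of_row_sum_eq_one {A : Matrix m ι K} (hA : ∀ i, ∑ j, A i j = 1)
    (w : ι → K) : A * vecMulVec (fun _ : ι => (1 : K)) w = vecMulVec (fun _ : m => (1 : K)) w := by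
  rw [mul_vecMulVec]
  congr 1
  ext i
  simpa [mulVec, dotProduct] using hA i

theorem vecMulVec_one_mul_self (v : ι → K) :
    vecMulVec (fun _ : ι => (1 : K)) v * vecMulVec (fun _ : ι => (1 : K)) v
      = (∑ j, v j) • vecMulVec (fun _ : ι => (1 : K)) v := by
  rw [vecMulVec_mul_vecMulVec, vecMulVec_smul]
  simp only [dotProduct, mul_one]

variable [DecidableEq ι]

theorem row_sum_one_sub_smul_add_smul_vecMulVec {P : Matrix ι ι K} {d : ι → K} (γ : K)
    (hP : ∀ i, ∑ j, P i j = 1) (hd : ∑ i, d i = 1) (i : ι) :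
    ∑ j, (1 - γ • P + γ • vecMulVec (fun _ : ι => (1 : K)) d) i j = 1 := by
  simp only [add_apply, sub_apply, smul_apply, smul_eq_mul, vecMulVec_apply, one_mul,
    Finset.sum_add_distrib, Finset.sum_sub_distrib, ← Finset.mul_sum, hP i, hd]
  simp [one_apply]

theorem of_one_mul_diagonal (w : ι → K) :
    of (fun _ _ : ι => (1 : K)) * diagonal w = vecMulVec (fun _ : ι => (1 : K)) w := by
  ext i j
  simp [mul_diagonal, vecMulVec_apply]

theorem sum_vecMul_mul_diagonal {M : Matrix ι ι K} {d : ι → K} {κ : K} (hd : ∑ i, d i = 1)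
    (hκ : ∀ i, ∑ j, d j * M i j = κ) : ∑ j, (d ᵥ* (M * diagonal d)) j = κ := by
  have hMd : M *ᵥ d = fun _ => κ := funext fun i => by
    simpa only [mulVec, dotProduct, mul_comm] using hκ i
  calc ∑ j, (d ᵥ* (M * diagonal d)) j = d ⬝ᵥ (M *ᵥ d) := by
        rw [← dotProduct_one, ← dotProduct_mulVec, ← mulVec_mulVec,
          show diagonal d *ᵥ 1 = d from funext fun i => by simp [mulVec_diagonal]]
      _ = κ := by simp [hMd, dotProduct, ← Finset.sum_mul, hd]

end CommRing

variable [DecidableEq ι] [Field K] {P M : Matrix ι ι K} {d : ι → K}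

theorem inv_diagonal_inv (hd : ∀ i, d i ≠ 0) : (diagonal fun i => (d i)⁻¹)⁻¹ = diagonal d := by
  refine inv_eq_left_inv ?_
  rw [diagonal_mul_diagonal, ← diagonal_one]
  exact congrArg diagonal (funext fun i => mul_inv_cancel₀ (hd i))

theorem mul_mul_diagonal_of_first_passage (hd : ∀ i, d i ≠ 0)
    (hM : M = P * (M - diagonal fun i => (d i)⁻¹) + of fun _ _ : ι => (1 : K)) :
    P * (M * diagonal d) = M * diagonal d - vecMulVec (fun _ : ι => (1 : K)) d + P := by
  have hDd : (diagonal fun i => (d i)⁻¹) * diagonal d = 1 := by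
    rw [diagonal_mul_diagonal, ← diagonal_one]
    exact congrArg diagonal (funext fun i => inv_mul_cancel₀ (hd i))
  have h := congrArg (· * diagonal d) hM
  simp only [add_mul, mul_sub, sub_mul, mul_assoc, hDd, mul_one, of_one_mul_diagonal] at h
  conv_rhs => rw [h]
  abel

theorem mul_one_sub_smul_eq_of_eq_add_vecMulVec {Z : Matrix ι ι K} {u : ι → K} {c : K}
    (hM : ∀ i, M i i = (d i)⁻¹) (hd : ∀ i, d i ≠ 0)
    (hZ : Z * (1 - c • (M * diagonal d))
      = 1 - M * diagonal d + vecMulVec (fun _ : ι => (1 : K)) u) :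
    Z * (1 - c • (M * diagonal d)) = 1 - M * diagonal d
      + of (fun _ _ : ι => (1 : K)) * diagonal (fun i => Z i i)
      - c • (of (fun _ _ : ι => (1 : K)) * diagonal (fun i => (Z * M) i i) * diagonal d) := by
  have hu : ∀ j, u j = Z j j - c * ((Z * M) j j * d j) := fun j => by
    have hjj := congrFun (congrFun hZ j) j
    simp only [mul_sub, mul_one, mul_smul_comm, ← mul_assoc, sub_apply, smul_apply, smul_eq_mul,
      mul_diagonal, add_apply, one_apply_eq, hM j, inv_mul_cancel₀ (hd j), vecMulVec_apply,
      one_mul] at hjj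
    linear_combination -hjj
  rw [hZ]
  ext i j
  simp [mul_diagonal, vecMulVec_apply, hu]
  ring

theorem isUnit_one_sub_smul_mul_diagonal {κ γ : K} (hd : ∀ i, d i ≠ 0)
    (hM : M = P * (M - diagonal fun i => (d i)⁻¹) + of fun _ _ : ι => (1 : K))
    (hP : ∀ i, ∑ j, P i j = 1) (hd_sum : ∑ i, d i = 1) (hκ : ∀ i, ∑ j, d j * M i j = κ)
    (hA : IsUnit (1 - γ • P + γ • vecMulVec (fun _ : ι => (1 : K)) d))
    (hγκ : 1 - (1 - γ) * κ ≠ 0) : IsUnit (1 - (1 - γ) • (M * diagonal d)) := by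
  have hAX := mul_vecMulVec_of_row_sum_eq_one
    (row_sum_one_sub_smul_add_smul_vecMulVec γ hP hd_sum) (d ᵥ* (M * diagonal d))
  have hXX := vecMulVec_one_mul_self (d ᵥ* (M * diagonal d))
  rw [sum_vecMul_mul_diagonal hd_sum hκ, ← vecMulVec_mul] at hXX
  rw [← vecMulVec_mul] at hAX
  refine isUnit_of_mul_isUnit_right (x := 1 - P + vecMulVec (fun _ : ι => (1 : K)) d) ?_
  rw [one_sub_add_mul_one_sub_smul (mul_mul_diagonal_of_first_passage hd hM) hAX]
  exact hA.mul (isUnit_one_sub_smul_of_mul_self_eq_smul hXX hγκ)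

end Matrix

theorem stmt9_general {n : ℕ} (P M : Matrix (Fin n) (Fin n) ℝ) (d : Fin n → ℝ) (κ γ : ℝ)
    (hP_row : ∀ i, ∑ j, P i j = 1)
    (hd_pos : ∀ i, 0 < d i) (hd_sum : ∑ i, d i = 1)
    (hM_diag : ∀ i, M i i = (d i)⁻¹)
    (hM_eq : M = P * (M - Matrix.diagonal (fun i => (d i)⁻¹))
        + Matrix.of (fun _ _ : Fin n => (1 : ℝ)))
    (hκ : ∀ i, ∑ j, d j * M i j = κ)
    (hZInv : IsUnit (1 - γ • P + γ • Matrix.vecMulVec (fun _ => (1 : ℝ)) d))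
    (h : (1 - γ) * κ < 1)
    (Z : Matrix (Fin n) (Fin n) ℝ)
    (hZ : Z = (1 - γ • P + γ • Matrix.vecMulVec (fun _ => (1 : ℝ)) d)⁻¹) :
    Z = (1 - M * (Matrix.diagonal fun i => (d i)⁻¹)⁻¹
          + Matrix.of (fun _ _ : Fin n => (1 : ℝ)) * Matrix.diagonal (fun i => Z i i)
          - (1 - γ) • (Matrix.of (fun _ _ : Fin n => (1 : ℝ))
            * Matrix.diagonal (fun i => (Z * M) i i)
            * (Matrix.diagonal fun i => (d i)⁻¹)⁻¹))
        * (1 - (1 - γ) • (M * (Matrix.diagonal fun i => (d i)⁻¹)⁻¹))⁻¹ := by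
  have hd : ∀ i, d i ≠ 0 := fun i => (hd_pos i).ne'
  have hZA : Z * (1 - γ • P + γ • vecMulVec (fun _ => 1) d) = 1 :=
    hZ ▸ nonsing_inv_mul _ ((isUnit_iff_isUnit_det _).mp hZInv)
  have hAX := mul_vecMulVec_of_row_sum_eq_one
    (row_sum_one_sub_smul_add_smul_vecMulVec γ hP_row hd_sum) (d ᵥ* (M * diagonal d))
  rw [← vecMulVec_mul] at hAX
  have hZX : Z * (vecMulVec (fun _ => 1) d * (M * diagonal d))
      = vecMulVec (fun _ => 1) d * (M * diagonal d) := by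
    conv_lhs => rw [← hAX, ← mul_assoc, hZA, one_mul]
  have hZB := mul_one_sub_smul_eq_of_mul_eq_one (mul_mul_diagonal_of_first_passage hd hM_eq) hZA hZX
  rw [vecMulVec_mul, ← vecMulVec_smul] at hZB
  have hB := isUnit_one_sub_smul_mul_diagonal hd hM_eq hP_row hd_sum hκ hZInv (sub_pos.mpr h).ne'
  rw [inv_diagonal_inv hd, ← mul_one_sub_smul_eq_of_eq_add_vecMulVec hM_diag hd hZB]
  exact (mul_nonsing_inv_cancel_right _ _ ((isUnit_iff_isUnit_det _).mp hB)).symm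

/-- If `(1-γ)κ < 1`, the discounted fundamental matrix satisfies
`Z = [I - M D⁻¹ + E (Z)_dg - (1-γ) E (Z M)_dg D⁻¹] (I - (1-γ) M D⁻¹)⁻¹`. -/
theorem stmt9 {n : ℕ} (P M : Matrix (Fin n) (Fin n) ℝ) (d : Fin n → ℝ) (κ γ : ℝ)
    (hP_nonneg : ∀ i j, 0 ≤ P i j) (hP_row : ∀ i, ∑ j, P i j = 1)
    (hd_pos : ∀ i, 0 < d i) (hd_sum : ∑ i, d i = 1)
    (hd_stat : Matrix.vecMul d P = d)
    (hM_diag : ∀ i, M i i = (d i)⁻¹)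
    (hM_eq : M = P * (M - Matrix.diagonal (fun i => (d i)⁻¹))
        + Matrix.of (fun _ _ : Fin n => (1 : ℝ)))
    (hκ : ∀ i, ∑ j, d j * M i j = κ)
    (hγ0 : 0 < γ) (hγ1 : γ ≤ 1)
    (hZInv : IsUnit (1 - γ • P + γ • Matrix.vecMulVec (fun _ => (1 : ℝ)) d))
    (h : (1 - γ) * κ < 1)
    (Z : Matrix (Fin n) (Fin n) ℝ)
    (hZ : Z = (1 - γ • P + γ • Matrix.vecMulVec (fun _ => (1 : ℝ)) d)⁻¹) :
    Z = (1 - M * (Matrix.diagonal fun i => (d i)⁻¹)⁻¹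
          + Matrix.of (fun _ _ : Fin n => (1 : ℝ)) * Matrix.diagonal (fun i => Z i i)
          - (1 - γ) • (Matrix.of (fun _ _ : Fin n => (1 : ℝ))
            * Matrix.diagonal (fun i => (Z * M) i i)
            * (Matrix.diagonal fun i => (d i)⁻¹)⁻¹))
        * (1 - (1 - γ) • (M * (Matrix.diagonal fun i => (d i)⁻¹)⁻¹))⁻¹ :=
  stmt9_general P M d κ γ hP_row hd_pos hd_sum hM_diag hM_eq hκ hZInv h Z hZ
end

section
/- For any probability row vector $d$ and row-stochastic matrices $P_{\pi'}, P_\pi$ arising from policies $\pi', \pi$ via a common kernel $P(s'|s,a)$, one has $\|d (P_{\pi'} - P_\pi)\|_1 \le 2\, \mathbb{E}_{s \sim d}[D_{\mathrm{TV}}(\pi'(\cdot|s) \| \pi(\cdot|s))]$, where $D_{\mathrm{TV}}(p\|q) = \frac{1}{2}\sum_a |p(a) - q(a)|$. -/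
open Matrix

/-- For a probability row vector `d` and transition matrices induced by policies
`π, π'` via a common kernel, `‖d (Pπ' - Pπ)‖₁ ≤ 2 E_{s∼d}[D_TV(π'(·|s) ‖ π(·|s))]`. -/
theorem stmt13 {nS nA : ℕ} (P : Fin nS → Fin nA → Fin nS → ℝ)
    (pol pol' : Fin nS → Fin nA → ℝ) (d : Fin nS → ℝ)
    (hP_nonneg : ∀ s a s', 0 ≤ P s a s')
    (hP_sum : ∀ s a, ∑ s', P s a s' = 1)
    (hpol_nonneg : ∀ s a, 0 ≤ pol s a) (hpol_sum : ∀ s, ∑ a, pol s a = 1)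
    (hpol'_nonneg : ∀ s a, 0 ≤ pol' s a) (hpol'_sum : ∀ s, ∑ a, pol' s a = 1)
    (hd_nonneg : ∀ s, 0 ≤ d s) (hd_sum : ∑ s, d s = 1) :
    ∑ s', |∑ s, d s * ((∑ a, P s a s' * pol' s a) - (∑ a, P s a s' * pol s a))|
      ≤ 2 * ∑ s, d s * ((1 / 2) * ∑ a, |pol' s a - pol s a|) := by
  have key : ∀ s' s, |d s * ((∑ a, P s a s' * pol' s a) - (∑ a, P s a s' * pol s a))|
      ≤ ∑ a, d s * (P s a s' * |pol' s a - pol s a|) := by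
    intro s' s
    rw [← Finset.sum_sub_distrib, ← Finset.mul_sum]
    calc |d s * ∑ a, (P s a s' * pol' s a - P s a s' * pol s a)|
        ≤ ∑ a, |d s * (P s a s' * pol' s a - P s a s' * pol s a)| := by
          rw [Finset.mul_sum]; exact Finset.abs_sum_le_sum_abs _ _
      _ ≤ ∑ a, d s * (P s a s' * |pol' s a - pol s a|) := by
          apply Finset.sum_le_sum; intro a _
          rw [abs_mul, abs_of_nonneg (hd_nonneg s), ← mul_sub, abs_mul,
            abs_of_nonneg (hP_nonneg s a s')]
      _ = d s * ∑ a, P s a s' * |pol' s a - pol s a| := by rw [Finset.mul_sum]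
  calc ∑ s', |∑ s, d s * ((∑ a, P s a s' * pol' s a) - (∑ a, P s a s' * pol s a))|
      ≤ ∑ s', ∑ s, ∑ a, d s * (P s a s' * |pol' s a - pol s a|) := by
        apply Finset.sum_le_sum; intro s' _
        exact le_trans (Finset.abs_sum_le_sum_abs _ _)
          (Finset.sum_le_sum fun s _ => key s' s)
    _ = ∑ s, ∑ a, d s * (|pol' s a - pol s a|) := by
        rw [Finset.sum_comm]
        apply Finset.sum_congr rfl; intro s _
        rw [Finset.sum_comm]
        apply Finset.sum_congr rfl; intro a _
        rw [← Finset.mul_sum, ← Finset.sum_mul, hP_sum, one_mul]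
    _ = 2 * ∑ s, d s * ((1 / 2) * ∑ a, |pol' s a - pol s a|) := by
        rw [Finset.mul_sum]
        apply Finset.sum_congr rfl; intro s _
        rw [Finset.mul_sum, Finset.mul_sum, Finset.mul_sum]
        apply Finset.sum_congr rfl; intros; ring
end

section
/- If $(1-\gamma)\kappa_{\pi'} < 1$, then the total variation distance between discounted state distributions is bounded: $D_{\mathrm{TV}}(d_{\pi',\gamma} \| d_{\pi,\gamma}) \le \frac{\gamma(\kappa_{\pi'} - 1)}{1 - (1-\gamma)\kappa_{\pi'}} \, \mathbb{E}_{s \sim d_{\pi,\gamma}}[D_{\mathrm{TV}}(\pi' \| \pi)[s]]$. -/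
open Matrix

/-- If `(1-γ)κ' < 1`, the total variation distance between discounted state
distributions is bounded:
`D_TV(d_{π',γ} ‖ d_{π,γ}) ≤ (γ(κ'-1)/(1-(1-γ)κ')) E_{s∼d_{π,γ}}[D_TV(π'‖π)[s]]`,
using the decomposition identity and the norm bounds from the context. -/
theorem stmt14 {nS nA : ℕ} (P : Fin nS → Fin nA → Fin nS → ℝ)
    (pol pol' : Fin nS → Fin nA → ℝ)
    (Pπ Pπ' M' D' : Matrix (Fin nS) (Fin nS) ℝ)
    (dγ dγ' : Fin nS → ℝ) (κ' γ : ℝ)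
    (hP_nonneg : ∀ s a s', 0 ≤ P s a s') (hP_sum : ∀ s a, ∑ s', P s a s' = 1)
    (hpol_nonneg : ∀ s a, 0 ≤ pol s a) (hpol_sum : ∀ s, ∑ a, pol s a = 1)
    (hpol'_nonneg : ∀ s a, 0 ≤ pol' s a) (hpol'_sum : ∀ s, ∑ a, pol' s a = 1)
    (hPπ : ∀ s s', Pπ s s' = ∑ a, P s a s' * pol s a)
    (hPπ' : ∀ s s', Pπ' s s' = ∑ a, P s a s' * pol' s a)
    (hdγ_nonneg : ∀ s, 0 ≤ dγ s) (hdγ_sum : ∑ s, dγ s = 1)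
    (hdγ'_nonneg : ∀ s, 0 ≤ dγ' s) (hdγ'_sum : ∑ s, dγ' s = 1)
    (hγ0 : 0 < γ) (hγ1 : γ ≤ 1) (hκ1 : 1 ≤ κ') (hκγ : (1 - γ) * κ' < 1)
    -- the decomposition identity for the difference of discounted state distributions
    (hId : dγ' - dγ = γ • Matrix.vecMul (Matrix.vecMul dγ (Pπ' - Pπ))
        ((1 - M' * D'⁻¹) * (1 - (1 - γ) • (M' * D'⁻¹))⁻¹))
    -- norm bound ‖I - M' D'⁻¹‖∞ = κ' - 1 (every absolute row sum equals κ' - 1)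
    (hB1 : ∀ i, ∑ j, |(1 - M' * D'⁻¹) i j| = κ' - 1)
    -- norm bound ‖(I - (1-γ) M' D'⁻¹)⁻¹‖∞ ≤ 1/(1-(1-γ)κ')
    (hB2 : ∀ i, ∑ j, |((1 - (1 - γ) • (M' * D'⁻¹))⁻¹) i j| ≤ 1 / (1 - (1 - γ) * κ')) :
    (1 / 2) * ∑ s, |dγ' s - dγ s|
      ≤ (γ * (κ' - 1) / (1 - (1 - γ) * κ'))
        * ∑ s, dγ s * ((1 / 2) * ∑ a, |pol' s a - pol s a|) := by
  have hh : 0 < 1 - (1 - γ) * κ' := by linarith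
  set A := (1 - M' * D'⁻¹) with hAdef
  set B := (1 - (1 - γ) • (M' * D'⁻¹))⁻¹ with hBdef
  set v := Matrix.vecMul dγ (Pπ' - Pπ) with hvdef
  set c := (κ' - 1) / (1 - (1 - γ) * κ') with hcdef
  have hc0 : 0 ≤ c := div_nonneg (by linarith) hh.le
  -- row sums of A*B bounded by c
  have hAB : ∀ i, ∑ j, |(A * B) i j| ≤ c := by
    intro i
    calc ∑ j, |(A * B) i j| ≤ ∑ j, ∑ k, |A i k| * |B k j| := by
          refine Finset.sum_le_sum fun j _ => ?_
          rw [Matrix.mul_apply]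
          exact (Finset.abs_sum_le_sum_abs _ _).trans (le_of_eq (by simp [abs_mul]))
      _ = ∑ k, |A i k| * ∑ j, |B k j| := by
          rw [Finset.sum_comm]; simp [Finset.mul_sum]
      _ ≤ ∑ k, |A i k| * (1 / (1 - (1 - γ) * κ')) :=
          Finset.sum_le_sum fun k _ =>
            mul_le_mul_of_nonneg_left (hB2 k) (abs_nonneg _)
      _ = (κ' - 1) * (1 / (1 - (1 - γ) * κ')) := by rw [← Finset.sum_mul, hB1 i]
      _ = c := by rw [hcdef]; ring
  -- ℓ1 norm of v * (A*B)
  have hstep : ∑ j, |Matrix.vecMul v (A * B) j| ≤ c * ∑ i, |v i| := by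
    calc ∑ j, |Matrix.vecMul v (A * B) j|
        ≤ ∑ j, ∑ i, |v i| * |(A * B) i j| := by
          refine Finset.sum_le_sum fun j _ => ?_
          rw [Matrix.vecMul, dotProduct]
          exact (Finset.abs_sum_le_sum_abs _ _).trans (le_of_eq (by simp [abs_mul]))
      _ = ∑ i, |v i| * ∑ j, |(A * B) i j| := by
          rw [Finset.sum_comm]; simp [Finset.mul_sum]
      _ ≤ ∑ i, |v i| * c :=
          Finset.sum_le_sum fun i _ =>
            mul_le_mul_of_nonneg_left (hAB i) (abs_nonneg _)
      _ = c * ∑ i, |v i| := by rw [← Finset.sum_mul]; ring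
  -- ℓ1 norm of v bounded by policy TV sums
  have hv1 : ∑ i, |v i| ≤ ∑ s, dγ s * ∑ a, |pol' s a - pol s a| := by
    calc ∑ i, |v i|
        ≤ ∑ i, ∑ s, dγ s * ∑ a, P s a i * |pol' s a - pol s a| := by
          refine Finset.sum_le_sum fun i _ => ?_
          rw [hvdef, Matrix.vecMul, dotProduct]
          refine (Finset.abs_sum_le_sum_abs _ _).trans
            (Finset.sum_le_sum fun s _ => ?_)
          rw [abs_mul, abs_of_nonneg (hdγ_nonneg s)]
          refine mul_le_mul_of_nonneg_left ?_ (hdγ_nonneg s)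
          have : (Pπ' - Pπ) s i = ∑ a, P s a i * (pol' s a - pol s a) := by
            simp only [Matrix.sub_apply, hPπ, hPπ', ← Finset.sum_sub_distrib]
            exact Finset.sum_congr rfl fun a _ => by ring
          rw [this]
          refine (Finset.abs_sum_le_sum_abs _ _).trans
            (Finset.sum_le_sum fun a _ => le_of_eq ?_)
          rw [abs_mul, abs_of_nonneg (hP_nonneg s a i)]
      _ = ∑ s, dγ s * ∑ a, |pol' s a - pol s a| := by
          rw [Finset.sum_comm]
          refine Finset.sum_congr rfl fun s _ => ?_
          rw [← Finset.mul_sum, Finset.sum_comm]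
          congr 1
          refine Finset.sum_congr rfl fun a _ => ?_
          rw [← Finset.sum_mul, hP_sum s a, one_mul]
  -- assemble
  have hdiff : ∀ s, dγ' s - dγ s = γ * Matrix.vecMul v (A * B) s := by
    intro s
    have := congrFun hId s
    simpa using this
  calc (1 / 2) * ∑ s, |dγ' s - dγ s|
      = (γ / 2) * ∑ s, |Matrix.vecMul v (A * B) s| := by
        rw [Finset.mul_sum, Finset.mul_sum]
        refine Finset.sum_congr rfl fun s _ => ?_
        rw [hdiff s, abs_mul, abs_of_pos hγ0]; ring
    _ ≤ (γ / 2) * (c * ∑ i, |v i|) :=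
        mul_le_mul_of_nonneg_left hstep (by linarith)
    _ ≤ (γ / 2) * (c * ∑ s, dγ s * ∑ a, |pol' s a - pol s a|) :=
        mul_le_mul_of_nonneg_left (mul_le_mul_of_nonneg_left hv1 hc0) (by linarith)
    _ = (γ * (κ' - 1) / (1 - (1 - γ) * κ'))
        * ∑ s, dγ s * ((1 / 2) * ∑ a, |pol' s a - pol s a|) := by
        rw [hcdef, Finset.mul_sum, Finset.mul_sum, Finset.mul_sum]
        refine Finset.sum_congr rfl fun s _ => ?_
        field_simp
end

section
/- The discounted performance difference equals the surrogate plus an error bounded by twice the TV distance of discounted state distributions times the maximum advantage: $|(\eta_{\pi',\gamma} - \eta_{\pi,\gamma}) - L_{\pi,\gamma}(\pi')| \le 2\epsilon_\gamma D_{\mathrm{TV}}(d_{\pi',\gamma} \| d_{\pi,\gamma})$, where $\epsilon_\gamma = \max_s |[r_{\pi'} - r_\pi + \gamma(P_{\pi'} - P_\pi)V_{\pi,\gamma}](s)|$. -/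
open Matrix

/-- The discounted performance difference equals the surrogate up to an error bounded by
twice the maximum advantage times the TV distance of discounted state distributions:
`|(η' - η) - L| ≤ 2 ε_γ D_TV(d_{π',γ} ‖ d_{π,γ})`,
with `ε_γ = max_s |[r_{π'} - r_π + γ(P_{π'} - P_π)V_{π,γ}](s)|`. -/
theorem stmt17 {n : ℕ} (hne : (Finset.univ : Finset (Fin n)).Nonempty)
    (P P' : Matrix (Fin n) (Fin n) ℝ) (r r' V dγ dγ' : Fin n → ℝ) (γ : ℝ)
    (hdγ_nonneg : ∀ s, 0 ≤ dγ s) (hdγ_sum : ∑ s, dγ s = 1)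
    (hdγ'_nonneg : ∀ s, 0 ≤ dγ' s) (hdγ'_sum : ∑ s, dγ' s = 1)
    (g : Fin n → ℝ)
    (hg : g = fun s => r' s - r s + γ * ((P' - P) *ᵥ V) s)
    -- the performance difference formula
    (hpdf : (∑ s, dγ' s * r' s) - (∑ s, dγ s * r s) = ∑ s, dγ' s * g s) :
    |((∑ s, dγ' s * r' s) - (∑ s, dγ s * r s)) - ∑ s, dγ s * g s|
      ≤ 2 * (Finset.univ.sup' hne fun s => |g s|)
        * ((1 / 2) * ∑ s, |dγ' s - dγ s|) := by
  rw [hpdf]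
  have h1 : (∑ s, dγ' s * g s) - ∑ s, dγ s * g s = ∑ s, (dγ' s - dγ s) * g s := by
    rw [← Finset.sum_sub_distrib]; congr 1; ext s; ring
  rw [h1]
  set M := Finset.univ.sup' hne fun s => |g s| with hM
  have hbound : |∑ s, (dγ' s - dγ s) * g s| ≤ ∑ s, |dγ' s - dγ s| * M := by
    refine (Finset.abs_sum_le_sum_abs _ _).trans (Finset.sum_le_sum fun s _ => ?_)
    rw [abs_mul]
    exact mul_le_mul_of_nonneg_left (Finset.le_sup' (fun s => |g s|) (Finset.mem_univ s)) (abs_nonneg _)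
  calc |∑ s, (dγ' s - dγ s) * g s| ≤ ∑ s, |dγ' s - dγ s| * M := hbound
    _ = M * ∑ s, |dγ' s - dγ s| := by rw [← Finset.sum_mul]; ring
    _ = 2 * M * ((1/2) * ∑ s, |dγ' s - dγ s|) := by ring
end
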